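/- arXiv:1506.04763 — 3 statements merged into one kernel-verified Lean document; each statement's English description precedes it below -/
import Mathlib

section
/- Let $W(x) = (1+|x|^2/3)^{-1/2}$, $W_\lambda(x) = \lambda^{1/2}W(\lambda x)$. Then $\lim_{\lambda \to \infty} \| W W_\lambda^3 + W^3 W_\lambda + W^2 W_\lambda^2 \|_{L^{3/2}(\mathbb{R}^3)} = 0$. -/
open MeasureTheory Filter Topology

noncomputable section

abbrev E3 := EuclideanSpace ℝ (Fin 3)

/-!
By AM–GM, `W²W_λ² ≤ (W W_λ³ + W³ W_λ) / 2`, so only the two outer cross terms matter, and each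
is `O(λ^{-1/2})` in `L^{3/2}`. Since `W ≤ 1`, `W W_λ³ ≤ W_λ³`, and the scaling
`‖f(λ ·)‖_{3/2} = λ^{-2} ‖f‖_{3/2}` on `ℝ³` gives `‖W_λ³‖_{3/2} = λ^{-1/2} ‖W³‖_{3/2}`, finite as
`W^{9/2} ≲ ⟨x⟩^{-9/2}` is integrable. For `W³ W_λ` the pointwise bound `W_λ(x) ≤ √3 λ^{-1/2} / |x|`
leaves `‖W³ / |x|‖_{3/2}`, finite because `|x|^{-3/2}` is integrable near `0`.
-/

open Metric
open scoped ENNReal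

namespace AubinTalenti

section Bubble

variable {E : Type*} [NormedAddCommGroup E]

def bubble (x : E) : ℝ := (1 + ‖x‖ ^ 2 / 3) ^ (-(1 : ℝ) / 2)

lemma bubble_eq_inv_sqrt (x : E) : bubble x = (√(1 + ‖x‖ ^ 2 / 3))⁻¹ := by
  rw [bubble, Real.sqrt_eq_rpow, ← Real.rpow_neg (by positivity)]
  norm_num

lemma bubble_pos (x : E) : 0 < bubble x := by
  rw [bubble_eq_inv_sqrt]; positivity

lemma bubble_le_one (x : E) : bubble x ≤ 1 := by
  rw [bubble_eq_inv_sqrt]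
  exact inv_le_one_of_one_le₀ (Real.one_le_sqrt.2 (le_add_of_nonneg_right (by positivity)))

lemma bubble_le_inv_norm {x : E} (hx : x ≠ 0) : bubble x ≤ √3 * ‖x‖⁻¹ := by
  have hnorm : 0 < ‖x‖ := norm_pos_iff.2 hx
  have : ‖x‖ / √3 ≤ √(1 + ‖x‖ ^ 2 / 3) := by
    rw [Real.le_sqrt' (by positivity), div_pow, Real.sq_sqrt (by norm_num)]
    linarith
  rw [bubble_eq_inv_sqrt, show √3 * ‖x‖⁻¹ = (‖x‖ / √3)⁻¹ by rw [inv_div, div_eq_mul_inv]]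
  exact inv_anti₀ (by positivity) this

lemma continuous_bubble : Continuous (bubble : E → ℝ) :=
  (by fun_prop : Continuous fun x : E => 1 + ‖x‖ ^ 2 / 3).rpow_const fun _ => .inl (by positivity)

end Bubble

section Integrability

variable {E : Type*} [NormedAddCommGroup E] [NormedSpace ℝ E] [FiniteDimensional ℝ E]
  [MeasurableSpace E] [BorelSpace E] (μ : Measure E) [μ.IsAddHaarMeasure]

open Module

lemma integrable_bubble_rpow {r : ℝ} (hr : finrank ℝ E < r) :
    Integrable (fun x : E => bubble x ^ r) μ := by
  have hr0 : 0 ≤ r := (Nat.cast_nonneg _).trans hr.le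
  refine ((integrable_rpow_neg_one_add_norm_sq hr).const_mul (3 ^ (r / 2))).mono'
    (continuous_bubble.rpow_const fun _ => .inr hr0).aestronglyMeasurable (.of_forall fun x => ?_)
  have h₀ : (0 : ℝ) ≤ 1 + ‖x‖ ^ 2 := by positivity
  rw [Real.norm_of_nonneg (Real.rpow_nonneg (bubble_pos x).le _), bubble,
    ← Real.rpow_mul (by positivity : (0 : ℝ) ≤ 1 + ‖x‖ ^ 2 / 3)]
  calc (1 + ‖x‖ ^ 2 / 3) ^ (-1 / 2 * r)
      ≤ ((1 + ‖x‖ ^ 2) / 3) ^ (-1 / 2 * r) :=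
        Real.rpow_le_rpow_of_nonpos (by positivity) (by linarith) (by linarith)
    _ = 3 ^ (r / 2) * (1 + ‖x‖ ^ 2) ^ (-r / 2) := by
        rw [Real.div_rpow h₀ (by norm_num), div_eq_mul_inv, mul_comm,
          ← Real.rpow_neg (by norm_num)]
        ring_nf

lemma integrable_norm_rpow_neg_mul_bubble_rpow (hd : 1 ≤ finrank ℝ E) {α r : ℝ} (hα₀ : 0 ≤ α)
    (hα : α < finrank ℝ E) (hr : finrank ℝ E < r) :
    Integrable (fun x : E => ‖x‖ ^ (-α) * bubble x ^ r) μ := by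
  have hr0 : 0 ≤ r := (Nat.cast_nonneg _).trans hr.le
  have hmeas : AEStronglyMeasurable (fun x : E => ‖x‖ ^ (-α) * bubble x ^ r) μ :=
    ((measurable_norm.pow_const _).mul
      (continuous_bubble.measurable.pow_const _)).aestronglyMeasurable
  have hbubble₀ (x : E) : 0 ≤ bubble x ^ r := Real.rpow_nonneg (bubble_pos x).le r
  have hbubble (x : E) : bubble x ^ r ≤ 1 :=
    Real.rpow_le_one (bubble_pos x).le (bubble_le_one x) hr0
  have hnorm₀ (x : E) : 0 ≤ ‖x‖ ^ (-α) := Real.rpow_nonneg (norm_nonneg x) _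
  rw [← integrableOn_univ, ← Set.union_compl_self (ball (0 : E) 1), integrableOn_union]
  refine ⟨integrableOn_ball_of_norm_le_rpow hd hα (C := 1) (.of_forall fun x => ?_) hmeas, ?_⟩
  · rw [Real.norm_of_nonneg (mul_nonneg (hnorm₀ x) (hbubble₀ x)), one_mul]
    exact mul_le_of_le_one_right (hnorm₀ x) (hbubble x)
  refine (integrable_bubble_rpow μ hr).integrableOn.mono' hmeas.restrict
    ((ae_restrict_iff' measurableSet_ball.compl).2 (.of_forall fun x hx => ?_))
  have hx : 1 ≤ ‖x‖ := by simpa using hx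
  rw [Real.norm_of_nonneg (mul_nonneg (hnorm₀ x) (hbubble₀ x))]
  exact mul_le_of_le_one_left (hbubble₀ x)
    (Real.rpow_le_one_of_one_le_of_nonpos hx (by linarith))

lemma eLpNorm_comp_smul {F : Type*} [NormedAddCommGroup F] {f : E → F}
    (hf : AEStronglyMeasurable f μ) {c : ℝ} (hc : c ≠ 0) (p : ℝ≥0∞) :
    eLpNorm (fun x => f (c • x)) p μ
      = ENNReal.ofReal |(c ^ finrank ℝ E)⁻¹| ^ (1 / p).toReal * eLpNorm f p μ := by
  have hmap := Measure.map_addHaar_smul μ hc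
  rw [← smul_eq_mul, ← eLpNorm_smul_measure_of_ne_zero (by simp [hc]), ← hmap,
    eLpNorm_map_measure (hmap ▸ hf.smul_measure _) (measurable_const_smul c).aemeasurable]
  rfl

end Integrability

section Rescaling

variable {E : Type*} [NormedAddCommGroup E] [NormedSpace ℝ E] {lam : ℝ}

def rescaledBubble (lam : ℝ) (x : E) : ℝ := lam ^ (1 / 2 : ℝ) * bubble (lam • x)

lemma rescaledBubble_nonneg (hlam : 0 ≤ lam) (x : E) : 0 ≤ rescaledBubble lam x :=
  mul_nonneg (Real.rpow_nonneg hlam _) (bubble_pos _).le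

lemma continuous_rescaledBubble (lam : ℝ) : Continuous (rescaledBubble lam : E → ℝ) :=
  continuous_const.mul (continuous_bubble.comp (continuous_const_smul lam))

lemma rescaledBubble_le (hlam : 0 < lam) {x : E} (hx : x ≠ 0) :
    rescaledBubble lam x ≤ lam ^ (-(1 / 2) : ℝ) * (√3 * ‖x‖⁻¹) := by
  calc rescaledBubble lam x
      ≤ lam ^ (1 / 2 : ℝ) * (√3 * ‖lam • x‖⁻¹) := by
        unfold rescaledBubble
        gcongr
        exact bubble_le_inv_norm (smul_ne_zero hlam.ne' hx)
    _ = lam ^ (-(1 / 2) : ℝ) * (√3 * ‖x‖⁻¹) := by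
        rw [norm_smul, Real.norm_of_nonneg hlam.le, show -(1 / 2 : ℝ) = 1 / 2 - 1 by norm_num,
          Real.rpow_sub_one hlam.ne']
        field_simp

end Rescaling

lemma abs_crossTerm_le {a b : ℝ} (ha : 0 ≤ a) (hb : 0 ≤ b) :
    |a * b ^ 3 + a ^ 3 * b + a ^ 2 * b ^ 2| ≤ 3 / 2 * (a * b ^ 3 + a ^ 3 * b) := by
  rw [abs_of_nonneg (by positivity)]
  nlinarith [mul_nonneg (mul_nonneg ha hb) (sq_nonneg (a - b))]

lemma eLpNorm_crossTerms_le {α : Type*} [MeasurableSpace α] {μ : Measure α} {p : ℝ≥0∞}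
    (hp : 1 ≤ p) {f g : α → ℝ} (hf : AEStronglyMeasurable f μ) (hg : AEStronglyMeasurable g μ)
    (hf₀ : 0 ≤ f) (hg₀ : 0 ≤ g) :
    eLpNorm (fun x => f x * g x ^ 3 + f x ^ 3 * g x + f x ^ 2 * g x ^ 2) p μ
      ≤ 3 / 2 * (eLpNorm (fun x => f x * g x ^ 3) p μ + eLpNorm (fun x => f x ^ 3 * g x) p μ) := by
  calc eLpNorm (fun x => f x * g x ^ 3 + f x ^ 3 * g x + f x ^ 2 * g x ^ 2) p μ
      ≤ eLpNorm ((3 / 2 : ℝ) • ((fun x => f x * g x ^ 3) + fun x => f x ^ 3 * g x)) p μ :=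
        eLpNorm_mono_real fun x => abs_crossTerm_le (hf₀ x) (hg₀ x)
    _ ≤ 3 / 2 * (eLpNorm (fun x => f x * g x ^ 3) p μ + eLpNorm (fun x => f x ^ 3 * g x) p μ) := by
        rw [eLpNorm_const_smul, show ‖(3 / 2 : ℝ)‖ₑ = 3 / 2 by
          norm_num [Real.enorm_of_nonneg, ENNReal.ofReal_div_of_pos]]
        gcongr
        exact eLpNorm_add_le (hf.mul (hg.pow 3)) ((hf.pow 3).mul hg) hp

lemma tendsto_ofReal_rpow_neg_mul_const_atTop {s : ℝ} (hs : 0 < s) {C : ℝ≥0∞} (hC : C ≠ ∞) :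
    Tendsto (fun lam : ℝ => ENNReal.ofReal (lam ^ (-s)) * C) atTop (𝓝 0) := by
  have h := ENNReal.Tendsto.mul_const (ENNReal.tendsto_ofReal (tendsto_rpow_neg_atTop hs))
    (.inr hC)
  rwa [ENNReal.ofReal_zero, zero_mul] at h

lemma toReal_three_halves : ((3 : ℝ≥0∞) / 2).toReal = 3 / 2 := by
  rw [ENNReal.toReal_div]; norm_num

lemma memLp_bubble_pow_three : MemLp (fun x : E3 => bubble x ^ 3) (3 / 2) volume := by
  refine (integrable_norm_rpow_iff (f := fun x : E3 => bubble x ^ 3)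
    (continuous_bubble.pow 3).aestronglyMeasurable (by norm_num)
    (ENNReal.div_ne_top (by norm_num) (by norm_num))).1 ?_
  refine (integrable_bubble_rpow volume (r := 9 / 2) (by norm_num)).congr (.of_forall fun x => ?_)
  have hb := (bubble_pos x).le
  dsimp only
  rw [Real.norm_of_nonneg (by positivity), toReal_three_halves, ← Real.rpow_natCast,
    ← Real.rpow_mul hb]
  norm_num

lemma memLp_inv_norm_mul_bubble_pow_three :
    MemLp (fun x : E3 => ‖x‖⁻¹ * bubble x ^ 3) (3 / 2) volume := by
  refine (integrable_norm_rpow_iff (f := fun x : E3 => ‖x‖⁻¹ * bubble x ^ 3)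
    (measurable_norm.inv.mul (continuous_bubble.pow 3).measurable).aestronglyMeasurable
    (by norm_num) (ENNReal.div_ne_top (by norm_num) (by norm_num))).1 ?_
  refine (integrable_norm_rpow_neg_mul_bubble_rpow volume (α := 3 / 2) (r := 9 / 2)
    (by simp) (by norm_num) (by norm_num) (by norm_num)).congr (.of_forall fun x => ?_)
  have hb := (bubble_pos x).le
  dsimp only
  rw [Real.norm_of_nonneg (by positivity), toReal_three_halves,
    Real.mul_rpow (by positivity) (by positivity), Real.inv_rpow (norm_nonneg x),
    ← Real.rpow_neg (norm_nonneg x), ← Real.rpow_natCast, ← Real.rpow_mul hb]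
  norm_num

variable {lam : ℝ}

lemma eLpNorm_bubble_mul_rescaledBubble_pow_le (hlam : 0 < lam) :
    eLpNorm (fun x : E3 => bubble x * rescaledBubble lam x ^ 3) (3 / 2) volume
      ≤ ENNReal.ofReal (lam ^ (-(1 / 2) : ℝ))
        * eLpNorm (fun x : E3 => bubble x ^ 3) (3 / 2) volume := by
  have hscale : ‖(lam ^ (1 / 2 : ℝ)) ^ 3‖ₑ
      * ENNReal.ofReal |(lam ^ Module.finrank ℝ E3)⁻¹| ^ (1 / (3 / 2 : ℝ≥0∞)).toReal
      = ENNReal.ofReal (lam ^ (-(1 / 2) : ℝ)) := by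
    have hexp : (1 / (3 / 2 : ℝ≥0∞)).toReal = 2 / 3 := by
      rw [one_div, ENNReal.toReal_inv, toReal_three_halves]; norm_num
    rw [finrank_euclideanSpace_fin, Real.enorm_of_nonneg (by positivity),
      abs_of_pos (by positivity), hexp, ENNReal.ofReal_rpow_of_nonneg (by positivity) (by norm_num),
      ← ENNReal.ofReal_mul (by positivity), ← Real.rpow_natCast, ← Real.rpow_natCast,
      ← Real.rpow_mul hlam.le, Real.inv_rpow (by positivity), ← Real.rpow_mul hlam.le,
      ← Real.rpow_neg hlam.le, ← Real.rpow_add hlam]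
    norm_num
  calc eLpNorm (fun x : E3 => bubble x * rescaledBubble lam x ^ 3) (3 / 2) volume
      ≤ eLpNorm ((lam ^ (1 / 2 : ℝ)) ^ 3 • fun x : E3 => bubble (lam • x) ^ 3) (3 / 2) volume :=
        eLpNorm_mono_real fun x => by
          have := bubble_pos x
          have := rescaledBubble_nonneg hlam.le x
          rw [Real.norm_of_nonneg (by positivity), Pi.smul_apply, smul_eq_mul, ← mul_pow]
          exact mul_le_of_le_one_left (by positivity) (bubble_le_one x)
    _ = ENNReal.ofReal (lam ^ (-(1 / 2) : ℝ))
        * eLpNorm (fun x : E3 => bubble x ^ 3) (3 / 2) volume := by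
        rw [eLpNorm_const_smul, eLpNorm_comp_smul volume (f := fun x : E3 => bubble x ^ 3)
          (continuous_bubble.pow 3).aestronglyMeasurable hlam.ne', ← mul_assoc, hscale]

lemma eLpNorm_bubble_pow_mul_rescaledBubble_le (hlam : 0 < lam) :
    eLpNorm (fun x : E3 => bubble x ^ 3 * rescaledBubble lam x) (3 / 2) volume
      ≤ ENNReal.ofReal (lam ^ (-(1 / 2) : ℝ))
        * eLpNorm (fun x : E3 => √3 * (‖x‖⁻¹ * bubble x ^ 3)) (3 / 2) volume := by
  calc eLpNorm (fun x : E3 => bubble x ^ 3 * rescaledBubble lam x) (3 / 2) volume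
      ≤ eLpNorm (lam ^ (-(1 / 2) : ℝ) • fun x : E3 => √3 * (‖x‖⁻¹ * bubble x ^ 3)) (3 / 2)
          volume := by
        refine eLpNorm_mono_ae_real ((Measure.ae_ne volume 0).mono fun x hx => ?_)
        have := bubble_pos x
        have := rescaledBubble_nonneg hlam.le x
        rw [Real.norm_of_nonneg (by positivity)]
        refine (mul_le_mul_of_nonneg_left (rescaledBubble_le hlam hx) (by positivity)).trans_eq ?_
        simp only [Pi.smul_apply, smul_eq_mul]
        ring
    _ = _ := by rw [eLpNorm_const_smul, Real.enorm_of_nonneg (by positivity)]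

end AubinTalenti

open AubinTalenti in
/-- Cross terms between the Aubin–Talenti bubble `W` and its rescaling `W_λ`
tend to `0` in `L^{3/2}(ℝ³)` as `λ → ∞`. -/
theorem cross_terms_vanish
    (W : E3 → ℝ) (hW : W = fun x => (1 + ‖x‖^2/3) ^ (-(1:ℝ)/2))
    (Wl : ℝ → E3 → ℝ)
    (hWl : ∀ lam : ℝ, Wl lam = fun x => lam ^ ((1:ℝ)/2) * W (lam • x)) :
    Tendsto
      (fun lam =>
        eLpNorm
          (fun x => W x * (Wl lam x)^3 + (W x)^3 * Wl lam x + (W x)^2 * (Wl lam x)^2)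
          (3/2) volume)
      atTop (nhds 0) := by
  obtain rfl : W = bubble := hW
  obtain rfl : Wl = rescaledBubble := funext hWl
  set C₁ := eLpNorm (fun x : E3 => bubble x ^ 3) (3 / 2) volume
  set C₂ := eLpNorm (fun x : E3 => √3 * (‖x‖⁻¹ * bubble x ^ 3)) (3 / 2) volume
  have hC : 3 / 2 * (C₁ + C₂) ≠ ∞ :=
    ENNReal.mul_ne_top (ENNReal.div_ne_top (by norm_num) (by norm_num)) (ENNReal.add_ne_top.2 ⟨memLp_bubble_pow_three.eLpNorm_ne_top,
        (memLp_inv_norm_mul_bubble_pow_three.const_mul √3).eLpNorm_ne_top⟩)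
  refine tendsto_of_tendsto_of_tendsto_of_le_of_le' tendsto_const_nhds
    (tendsto_ofReal_rpow_neg_mul_const_atTop (by norm_num : (0 : ℝ) < 1 / 2) hC)
    (.of_forall fun _ => zero_le) ?_
  filter_upwards [eventually_gt_atTop 0] with lam hlam
  calc _ ≤ _ := eLpNorm_crossTerms_le (by rw [ENNReal.le_div_iff_mul_le] <;> norm_num)
          continuous_bubble.aestronglyMeasurable
          (continuous_rescaledBubble lam).aestronglyMeasurable
          (fun x => (bubble_pos x).le) (rescaledBubble_nonneg hlam.le)
    _ ≤ 3 / 2 * (ENNReal.ofReal (lam ^ (-(1 / 2) : ℝ)) * C₁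
          + ENNReal.ofReal (lam ^ (-(1 / 2) : ℝ)) * C₂) := by
        gcongr
        · exact eLpNorm_bubble_mul_rescaledBubble_pow_le hlam
        · exact eLpNorm_bubble_pow_mul_rescaledBubble_le hlam
    _ = ENNReal.ofReal (lam ^ (-(1 / 2) : ℝ)) * (3 / 2 * (C₁ + C₂)) := by ring
end
end

section
/- For every $f: (0,\infty) \to \mathbb{R}$ absolutely continuous with $f(\rho) \to 0$ as $\rho\to\infty$ and $\int_0^\infty |f'(\rho)|^2 \rho^2 d\rho < \infty$, one has $\left\| \sup_{\rho > t} |f(\rho)| \right\|_{L^2_t(0,\infty)}^2 \le C \int_0^\infty |f'(\rho)|^2 \rho^2\, d\rho$ for an absolute constant $C$. -/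
/-!
For `ρ > t`, `|f ρ| ≤ ∫_t^∞ |f'|` by the fundamental theorem of calculus on `(ρ, ∞)`; the tail of
`f'` is integrable by Cauchy–Schwarz against the weight `s²`. The theorem is then Hardy's inequality
`∫_0^∞ (∫_t^∞ g)² dt ≤ 4 ∫_0^∞ g(s)² s² ds`: Cauchy–Schwarz against `s^{3/2}` gives
`(∫_t^∞ g)² ≤ 2 t^{-1/2} ∫_t^∞ g² s^{3/2}`, and after exchanging the integrals
`∫_0^s 2 t^{-1/2} dt = 4 s^{1/2}` restores the weight `s²`.
-/

open MeasureTheory Filter Topology ENNReal Set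

theorem sq_lintegral_mul_le {α : Type*} [MeasurableSpace α] {μ : Measure α} {u v : α → ℝ≥0∞}
    (hu : AEMeasurable u μ) (hv : AEMeasurable v μ) :
    (∫⁻ x, u x * v x ∂μ) ^ 2 ≤ (∫⁻ x, u x ^ 2 ∂μ) * ∫⁻ x, v x ^ 2 ∂μ := by
  have h := ENNReal.lintegral_mul_le_Lp_mul_Lq μ Real.HolderConjugate.two_two hu hv
  have hsq : ∀ x : ℝ≥0∞, (x ^ (1 / 2 : ℝ)) ^ 2 = x := fun x => by
    rw [← ENNReal.rpow_mul_natCast]; norm_num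
  calc (∫⁻ x, u x * v x ∂μ) ^ 2
      ≤ ((∫⁻ x, u x ^ (2 : ℝ) ∂μ) ^ (1 / 2 : ℝ) * (∫⁻ x, v x ^ (2 : ℝ) ∂μ) ^ (1 / 2 : ℝ)) ^ 2 := by
        gcongr; exact h
    _ = (∫⁻ x, u x ^ 2 ∂μ) * ∫⁻ x, v x ^ 2 ∂μ := by
        simp only [mul_pow, hsq, ENNReal.rpow_two]

theorem lintegral_Ioi_ofReal_rpow {t r : ℝ} (ht : 0 < t) (hr : r < -1) :
    ∫⁻ s in Ioi t, ENNReal.ofReal (s ^ r) = ENNReal.ofReal (-t ^ (r + 1) / (r + 1)) := by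
  rw [← ofReal_integral_eq_lintegral_ofReal (integrableOn_Ioi_rpow_of_lt hr ht)
    ((ae_restrict_iff' measurableSet_Ioi).mpr
      (ae_of_all _ fun s hs => Real.rpow_nonneg (ht.trans hs).le r)),
    integral_Ioi_rpow_of_lt hr ht]

theorem lintegral_Ioo_zero_ofReal_rpow {s r : ℝ} (hs : 0 ≤ s) (hr : -1 < r) :
    ∫⁻ t in Ioo 0 s, ENNReal.ofReal (t ^ r) = ENNReal.ofReal (s ^ (r + 1) / (r + 1)) := by
  have hint : IntegrableOn (fun t : ℝ => t ^ r) (Ioc 0 s) :=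
    (intervalIntegrable_iff_integrableOn_Ioc_of_le hs).mp
      (intervalIntegral.intervalIntegrable_rpow' hr)
  rw [Measure.restrict_congr_set Ioo_ae_eq_Ioc,
    ← ofReal_integral_eq_lintegral_ofReal hint
      ((ae_restrict_iff' measurableSet_Ioc).mpr
        (ae_of_all _ fun t ht => Real.rpow_nonneg ht.1.le r)),
    ← intervalIntegral.integral_of_le hs, integral_rpow (Or.inl hr),
    Real.zero_rpow (by linarith), sub_zero]

theorem sq_lintegral_Ioi_le_lintegral_mul_rpow {g : ℝ → ℝ≥0∞} {t r : ℝ}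
    (hg : AEMeasurable g (volume.restrict (Ioi t))) (ht : 0 < t) (hr : 1 < r) :
    (∫⁻ s in Ioi t, g s) ^ 2 ≤
      (∫⁻ s in Ioi t, g s ^ 2 * ENNReal.ofReal (s ^ r)) *
        ENNReal.ofReal (t ^ (1 - r) / (r - 1)) := by
  have h := sq_lintegral_mul_le (μ := volume.restrict (Ioi t))
    (u := fun s => g s * ENNReal.ofReal (s ^ (r / 2))) (v := fun s => ENNReal.ofReal (s ^ (-(r / 2))))
    (hg.mul (by fun_prop)) (by fun_prop)
  have hsplit : ∀ s ∈ Ioi t, g s * ENNReal.ofReal (s ^ (r / 2)) * ENNReal.ofReal (s ^ (-(r / 2)))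
      = g s := fun s hs => by
    have hs0 : 0 < s := ht.trans hs
    rw [mul_assoc, ← ENNReal.ofReal_mul (Real.rpow_nonneg hs0.le _), Real.rpow_neg hs0.le,
      mul_inv_cancel₀ (Real.rpow_pos_of_pos hs0 _).ne', ENNReal.ofReal_one, mul_one]
  have hsq : ∀ s ∈ Ioi t, ∀ y : ℝ, ENNReal.ofReal (s ^ y) ^ 2 = ENNReal.ofReal (s ^ (2 * y)) :=
    fun s hs y => by
      rw [← ENNReal.ofReal_pow (Real.rpow_nonneg (ht.trans hs).le _),
        ← Real.rpow_mul_natCast (ht.trans hs).le, mul_comm]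
      norm_num
  rw [setLIntegral_congr_fun measurableSet_Ioi hsplit] at h
  refine h.trans_eq ?_
  congr 1
  · refine setLIntegral_congr_fun measurableSet_Ioi fun s hs => ?_
    rw [mul_pow, hsq s hs]
    ring_nf
  · rw [setLIntegral_congr_fun measurableSet_Ioi fun s hs => hsq s hs _,
      lintegral_Ioi_ofReal_rpow ht (by linarith)]
    congr 1
    rw [show 2 * -(r / 2) + 1 = 1 - r by ring, neg_div, ← div_neg, neg_sub]

theorem lintegral_Ioi_lintegral_Ioi_swap {F : ℝ → ℝ → ℝ≥0∞}
    (hF : Measurable (Function.uncurry F)) (a : ℝ) :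
    ∫⁻ t in Ioi a, ∫⁻ s in Ioi t, F t s = ∫⁻ s in Ioi a, ∫⁻ t in Ioo a s, F t s := by
  set K : Set (ℝ × ℝ) := {p | a < p.1 ∧ p.1 < p.2}
  have hK : MeasurableSet K :=
    (measurableSet_lt measurable_const measurable_fst).inter
      (measurableSet_lt measurable_fst measurable_snd)
  have hleft : ∀ t, (Ioi a).indicator (fun t => ∫⁻ s in Ioi t, F t s) t =
      ∫⁻ s, K.indicator (Function.uncurry F) (t, s) := fun t => by
    by_cases ht : t ∈ Ioi a
    · rw [indicator_of_mem ht, ← lintegral_indicator measurableSet_Ioi]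
      congr 1; ext s
      simp [K, indicator_apply, mem_Ioi.mp ht]
    · rw [indicator_of_notMem ht]
      simp [K, show ¬a < t from ht]
  have hright : ∀ s, (Ioi a).indicator (fun s => ∫⁻ t in Ioo a s, F t s) s =
      ∫⁻ t, K.indicator (Function.uncurry F) (t, s) := fun s => by
    by_cases hs : s ∈ Ioi a
    · rw [indicator_of_mem hs, ← lintegral_indicator measurableSet_Ioo]
      rfl
    · rw [indicator_of_notMem hs]
      have hK_empty : ∀ t, ¬(a < t ∧ t < s) := fun t h => hs (h.1.trans h.2)
      simp [K, hK_empty]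
  rw [← lintegral_indicator measurableSet_Ioi, ← lintegral_indicator measurableSet_Ioi]
  simp only [hleft, hright]
  exact lintegral_lintegral_swap ((hF.indicator hK).comp measurable_id).aemeasurable

theorem lintegral_Ioi_sq_lintegral_Ioi_le {g : ℝ → ℝ≥0∞} (hg : Measurable g) :
    ∫⁻ t in Ioi 0, (∫⁻ s in Ioi t, g s) ^ 2 ≤
      4 * ∫⁻ s in Ioi 0, g s ^ 2 * ENNReal.ofReal (s ^ 2) := by
  set G : ℝ → ℝ≥0∞ := fun s => g s ^ 2 * ENNReal.ofReal (s ^ (3 / 2 : ℝ))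
  set W : ℝ → ℝ≥0∞ := fun t => ENNReal.ofReal (t ^ (1 - 3 / 2 : ℝ) / (3 / 2 - 1))
  have hG : Measurable G := by fun_prop
  have hW : Measurable W := by fun_prop
  have hweight : ∀ s ∈ Ioi (0 : ℝ),
      ENNReal.ofReal (s ^ (3 / 2 : ℝ)) * ∫⁻ t in Ioo 0 s, W t = 4 * ENNReal.ofReal (s ^ 2) := by
    intro s hs
    have hsum : s ^ (3 / 2 : ℝ) * s ^ (1 / 2 : ℝ) = s ^ 2 := by
      rw [← Real.rpow_add hs]; norm_num
    have hW2 : ∀ t, W t = 2 * ENNReal.ofReal (t ^ (-(1 / 2) : ℝ)) := fun t => by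
      rw [← ENNReal.ofReal_ofNat 2, ← ENNReal.ofReal_mul zero_le_two]
      simp only [W]
      ring_nf
    simp_rw [hW2]
    rw [lintegral_const_mul' _ _ ofNat_ne_top, lintegral_Ioo_zero_ofReal_rpow hs.le (by norm_num),
      ← ENNReal.ofReal_ofNat 2, ← ENNReal.ofReal_ofNat 4, ← ENNReal.ofReal_mul zero_le_two,
      ← ENNReal.ofReal_mul (Real.rpow_nonneg hs.le _), ← ENNReal.ofReal_mul zero_le_four]
    congr 1
    rw [show (-(1 / 2) + 1 : ℝ) = 1 / 2 by norm_num]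
    linear_combination 4 * hsum
  calc ∫⁻ t in Ioi 0, (∫⁻ s in Ioi t, g s) ^ 2
      ≤ ∫⁻ t in Ioi 0, (∫⁻ s in Ioi t, G s) * W t :=
        setLIntegral_mono' measurableSet_Ioi fun t ht =>
          sq_lintegral_Ioi_le_lintegral_mul_rpow hg.aemeasurable ht (by norm_num)
    _ = ∫⁻ t in Ioi 0, ∫⁻ s in Ioi t, G s * W t := by
        simp_rw [lintegral_mul_const _ hG]
    _ = ∫⁻ s in Ioi 0, ∫⁻ t in Ioo 0 s, G s * W t :=
        lintegral_Ioi_lintegral_Ioi_swap (by fun_prop) 0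
    _ = ∫⁻ s in Ioi 0, 4 * (g s ^ 2 * ENNReal.ofReal (s ^ 2)) := by
        refine setLIntegral_congr_fun measurableSet_Ioi fun s hs => ?_
        rw [lintegral_const_mul _ hW, mul_assoc, hweight s hs, mul_left_comm]
    _ = 4 * ∫⁻ s in Ioi 0, g s ^ 2 * ENNReal.ofReal (s ^ 2) :=
        lintegral_const_mul' _ _ ofNat_ne_top

theorem enorm_le_lintegral_Ioi_enorm_of_hasDerivAt_of_tendsto_zero {f f' : ℝ → ℝ} {a : ℝ}
    (hderiv : ∀ x ∈ Ici a, HasDerivAt f (f' x) x) (hf' : IntegrableOn f' (Ioi a))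
    (hf : Tendsto f atTop (𝓝 0)) : ‖f a‖ₑ ≤ ∫⁻ x in Ioi a, ‖f' x‖ₑ :=
  calc ‖f a‖ₑ = ‖∫ x in Ioi a, f' x‖ₑ := by
        rw [integral_Ioi_of_hasDerivAt_of_tendsto' hderiv hf' hf, zero_sub, enorm_neg]
    _ ≤ ∫⁻ x in Ioi a, ‖f' x‖ₑ := enorm_integral_le_lintegral_enorm _

theorem integrableOn_Ioi_of_lintegral_enorm_sq_mul_sq_lt_top {φ : ℝ → ℝ} {t : ℝ} (ht : 0 < t)
    (hφ : AEStronglyMeasurable φ (volume.restrict (Ioi t)))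
    (h : ∫⁻ s in Ioi t, ‖φ s‖ₑ ^ 2 * ENNReal.ofReal (s ^ 2) < ∞) : IntegrableOn φ (Ioi t) := by
  have hsq := sq_lintegral_Ioi_le_lintegral_mul_rpow hφ.enorm ht one_lt_two
  simp_rw [Real.rpow_two] at hsq
  have hlt := hsq.trans_lt (mul_lt_top h ofReal_lt_top)
  exact ⟨hφ, (pow_lt_top_iff.mp hlt).resolve_right two_ne_zero⟩

/-- Weighted trace inequality: `‖sup_{ρ>t}|f(ρ)|‖²_{L²_t(0,∞)} ≤ C ∫_0^∞ |f'(ρ)|²ρ² dρ`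
for `f` vanishing at infinity. -/
theorem sup_tail_L2_bound :
    ∃ C : ℝ≥0∞, 0 < C ∧ C < ⊤ ∧
      ∀ f f' : ℝ → ℝ,
        (∀ ρ, 0 < ρ → HasDerivAt f (f' ρ) ρ) →
        Tendsto f atTop (nhds 0) →
        (∫⁻ ρ in Set.Ioi (0:ℝ), ENNReal.ofReal (|f' ρ|^2 * ρ^2)) < ⊤ →
        (∫⁻ t in Set.Ioi (0:ℝ),
            (⨆ (ρ : ℝ) (_ : t < ρ), ENNReal.ofReal |f ρ|)^2) ≤
          C * ∫⁻ ρ in Set.Ioi (0:ℝ), ENNReal.ofReal (|f' ρ|^2 * ρ^2) := by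
  refine ⟨4, by norm_num, by norm_num, fun f f' hderiv hlim hfin => ?_⟩
  -- `f'` need not be measurable, but on `(0, ∞)` it agrees with the measurable `deriv f`.
  have henergy : ∫⁻ ρ in Ioi 0, ENNReal.ofReal (|f' ρ| ^ 2 * ρ ^ 2) =
      ∫⁻ s in Ioi 0, ‖deriv f s‖ₑ ^ 2 * ENNReal.ofReal (s ^ 2) :=
    setLIntegral_congr_fun measurableSet_Ioi fun s hs => by
      rw [(hderiv s hs).deriv, ENNReal.ofReal_mul (sq_nonneg _),
        ENNReal.ofReal_pow (abs_nonneg _), Real.enorm_eq_ofReal_abs]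
  rw [henergy] at hfin ⊢
  have hsup : ∀ t ∈ Ioi (0 : ℝ),
      (⨆ (ρ : ℝ) (_ : t < ρ), ENNReal.ofReal |f ρ|) ≤ ∫⁻ s in Ioi t, ‖deriv f s‖ₑ := by
    refine fun t ht => iSup₂_le fun ρ hρ => ?_
    have hρ0 : 0 < ρ := lt_trans ht hρ
    have hint : IntegrableOn (deriv f) (Ioi ρ) :=
      integrableOn_Ioi_of_lintegral_enorm_sq_mul_sq_lt_top hρ0
        (measurable_deriv f).aestronglyMeasurable
        ((lintegral_mono_set (Ioi_subset_Ioi hρ0.le)).trans_lt hfin)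
    rw [← Real.enorm_eq_ofReal_abs]
    exact (enorm_le_lintegral_Ioi_enorm_of_hasDerivAt_of_tendsto_zero
      (fun x hx => (hderiv x (hρ0.trans_le hx)).differentiableAt.hasDerivAt) hint hlim).trans
      (lintegral_mono_set (Ioi_subset_Ioi hρ.le))
  calc _ ≤ ∫⁻ t in Ioi 0, (∫⁻ s in Ioi t, ‖deriv f s‖ₑ) ^ 2 :=
        setLIntegral_mono' measurableSet_Ioi fun t ht => by
          gcongr; exact hsup t ht
    _ ≤ _ := lintegral_Ioi_sq_lintegral_Ioi_le (measurable_deriv f).enorm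
end

section
/- Let $f \in \dot H^1_{rad}(\mathbb{R}^3)$ be radial (identified with $f(\rho)$, $\rho = |x|$, smooth for simplicity) and for $t, r > 0$ set $v(t,r) = \frac{1}{r}\left[ f(r+t)(r+t) - f(|r-t|)(t-r) \right]$ (the radial solution of the free wave equation with data $(f,0)$). Then $\|\sup_{r>0}|v(t,r)|\|_{L^2_t(0,\infty)} \le C \|\nabla f\|_{L^2(\mathbb{R}^3)}$ for an absolute constant $C$. -/
/-!
Write `g(u) = u f(|u|)` for the odd extension of `ρ f(ρ)`. Then `r v(t,r) = g(t+r) - g(t-r)` for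
every `r > 0`, whether `r < t` or `r > t`, so `|v(t,r)| ≤ 2 M[g'](t)` with `M` the centred
Hardy–Littlewood maximal function. The maximal inequality `‖M w‖₂ ≤ C ‖w‖₂` (Vitali covering for
the weak `(1,1)` bound, then the layer-cake formula) reduces the claim to `∫_0^∞ |g'|²`, since
`g'` is even and equals `(ρ f)' = f + ρ f'` on `(0,∞)`. Finally `|f(ρ)| ≤ ∫_ρ^∞ |f'|` because
`f → 0` at infinity, and Hardy's inequality `∫_0^∞ (∫_t^∞ h)² dt ≤ 4 ∫_0^∞ h(σ)² σ² dσ` bounds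
that tail term by the energy `∫_0^∞ |f'(ρ)|² ρ² dρ`.
-/

open MeasureTheory Filter Topology ENNReal

noncomputable section

open Set

namespace RadialWave

/-! ### Layer cake -/

lemma setOf_ofReal_lt_inter_Ioi {a : ℝ≥0∞} (ha : a ≠ ⊤) :
    {l : ℝ | ENNReal.ofReal l < a} ∩ Ioi 0 = Ioo 0 a.toReal := by
  ext l
  simp only [mem_inter_iff, mem_ofPred_eq, mem_Ioi, mem_Ioo]
  constructor
  · rintro ⟨h, hl⟩
    exact ⟨hl, (ENNReal.ofReal_lt_iff_lt_toReal hl.le ha).1 h⟩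
  · rintro ⟨hl, h⟩
    exact ⟨(ENNReal.ofReal_lt_iff_lt_toReal hl.le ha).2 h, hl⟩

lemma volume_setOf_ofReal_lt_inter_Ioi (a : ℝ≥0∞) :
    volume ({l : ℝ | ENNReal.ofReal l < a} ∩ Ioi 0) = a := by
  rcases eq_or_ne a ⊤ with rfl | ha
  · simp
  · rw [setOf_ofReal_lt_inter_Ioi ha, Real.volume_Ioo, sub_zero, ENNReal.ofReal_toReal ha]

lemma lintegral_Ioo_zero_two_mul {b : ℝ} (hb : 0 ≤ b) :
    ∫⁻ l in Ioo 0 b, ENNReal.ofReal (2 * l) = ENNReal.ofReal (b ^ 2) := by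
  have hint : IntegrableOn (fun l : ℝ => 2 * l) (Ioo 0 b) :=
    (continuous_const.mul continuous_id).integrableOn_Icc.mono_set Ioo_subset_Icc_self
  rw [← ofReal_integral_eq_lintegral_ofReal hint
    ((ae_restrict_mem measurableSet_Ioo).mono fun l hl => by
      simp only [Pi.zero_apply]; linarith [hl.1]),
    ← integral_Ioc_eq_integral_Ioo, ← intervalIntegral.integral_of_le hb,
    intervalIntegral.integral_const_mul, integral_id]
  ring_nf

lemma lintegral_Ioi_zero_two_mul : ∫⁻ l in Ioi (0 : ℝ), ENNReal.ofReal (2 * l) = ⊤ := by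
  refine ENNReal.eq_top_of_forall_nnreal_le fun c => ?_
  calc (c : ℝ≥0∞) ≤ ENNReal.ofReal ((c + 1 : ℝ) ^ 2) := by
        rw [← ENNReal.ofReal_coe_nnreal]; gcongr; nlinarith [c.2]
    _ = ∫⁻ l in Ioo 0 (c + 1 : ℝ), ENNReal.ofReal (2 * l) :=
        (lintegral_Ioo_zero_two_mul (by positivity)).symm
    _ ≤ _ := lintegral_mono_set Ioo_subset_Ioi_self

lemma lintegral_setOf_ofReal_lt_inter_Ioi_two_mul (a : ℝ≥0∞) :
    ∫⁻ l in {l : ℝ | ENNReal.ofReal l < a} ∩ Ioi 0, ENNReal.ofReal (2 * l) = a ^ 2 := by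
  rcases eq_or_ne a ⊤ with rfl | ha
  · simpa using lintegral_Ioi_zero_two_mul
  · rw [setOf_ofReal_lt_inter_Ioi ha, lintegral_Ioo_zero_two_mul ENNReal.toReal_nonneg,
      ENNReal.ofReal_pow ENNReal.toReal_nonneg, ENNReal.ofReal_toReal ha]

variable {α : Type*} [MeasurableSpace α] {μ : Measure α}

lemma lintegral_Ioi_mul_setLIntegral_lt [SFinite μ] {g w : α → ℝ≥0∞} (hg : Measurable g)
    (hw : Measurable w) {φ : ℝ → ℝ≥0∞} (hφ : Measurable φ) :
    ∫⁻ l in Ioi 0, φ l * ∫⁻ x in {x | ENNReal.ofReal l < g x}, w x ∂μ =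
      ∫⁻ x, w x * (∫⁻ l in {l | ENNReal.ofReal l < g x} ∩ Ioi 0, φ l) ∂μ := by
  set S := {p : α × ℝ | ENNReal.ofReal p.2 < g p.1}
  have hS : MeasurableSet S :=
    measurableSet_lt (ENNReal.measurable_ofReal.comp measurable_snd) (hg.comp measurable_fst)
  have hF : Measurable (S.indicator fun p => w p.1 * φ p.2) :=
    ((hw.comp measurable_fst).mul (hφ.comp measurable_snd)).indicator hS
  calc ∫⁻ l in Ioi 0, φ l * ∫⁻ x in {x | ENNReal.ofReal l < g x}, w x ∂μ
      = ∫⁻ l in Ioi 0, ∫⁻ x, S.indicator (fun p => w p.1 * φ p.2) (x, l) ∂μ := by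
        refine lintegral_congr fun l => ?_
        rw [← lintegral_const_mul _ hw,
          ← lintegral_indicator (measurableSet_lt measurable_const hg)]
        congr 1 with x
        simp only [S, indicator_apply, mem_ofPred_eq, mul_comm]
    _ = ∫⁻ x, (∫⁻ l in Ioi 0, S.indicator (fun p => w p.1 * φ p.2) (x, l)) ∂μ :=
        lintegral_lintegral_swap (f := fun l x => S.indicator (fun p => w p.1 * φ p.2) (x, l))
          (hF.comp measurable_swap).aemeasurable
    _ = ∫⁻ x, w x * (∫⁻ l in {l | ENNReal.ofReal l < g x} ∩ Ioi 0, φ l) ∂μ := by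
        refine lintegral_congr fun x => ?_
        have hA : MeasurableSet {l : ℝ | ENNReal.ofReal l < g x} :=
          measurableSet_lt ENNReal.measurable_ofReal measurable_const
        rw [← Measure.restrict_restrict hA, ← lintegral_const_mul _ hφ, ← lintegral_indicator hA]
        congr 1 with l

lemma lintegral_sq_eq_lintegral_meas_lt [SFinite μ] {g : α → ℝ≥0∞} (hg : Measurable g) :
    ∫⁻ x, g x ^ 2 ∂μ = ∫⁻ l in Ioi 0, ENNReal.ofReal (2 * l) * μ {x | ENNReal.ofReal l < g x} := by
  simpa only [setLIntegral_one, one_mul, lintegral_setOf_ofReal_lt_inter_Ioi_two_mul] using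
    (lintegral_Ioi_mul_setLIntegral_lt (μ := μ) (w := fun _ => 1)
      (φ := fun l => ENNReal.ofReal (2 * l)) hg measurable_const (by fun_prop)).symm

/-! ### The Hardy–Littlewood maximal function -/

lemma exists_pairwiseDisjoint_Ioo_volume_le {S : Set ℝ} {ρ : ℝ → ℝ} {R : ℝ}
    (hρ : ∀ t ∈ S, 0 < ρ t) (hR : ∀ t ∈ S, ρ t ≤ R) :
    ∃ u ⊆ S, u.Countable ∧ u.PairwiseDisjoint (fun b => Ioo (b - ρ b) (b + ρ b)) ∧
      volume S ≤ 4 * ∑' b : u, volume (Ioo ((b : ℝ) - ρ b) (b + ρ b)) := by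
  obtain ⟨u, huS, hdisj, hcov⟩ :=
    Vitali.exists_disjoint_subfamily_covering_enlargement_closedBall S id ρ R hR 4 (by norm_num)
  have hdisj' : u.PairwiseDisjoint fun b => Ioo (b - ρ b) (b + ρ b) :=
    hdisj.mono fun b => by simp only [id, Real.closedBall_eq_Icc]; exact Ioo_subset_Icc_self
  have hcount : u.Countable :=
    hdisj'.countable_of_isOpen (fun _ _ => isOpen_Ioo) fun b hb =>
      nonempty_Ioo.2 (by linarith [hρ b (huS hb)])
  refine ⟨u, huS, hcount, hdisj', ?_⟩
  have hcover : S ⊆ ⋃ b ∈ u, Metric.closedBall b (4 * ρ b) := fun a ha => by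
    obtain ⟨b, hb, hsub⟩ := hcov a ha
    exact mem_biUnion hb (hsub (Metric.mem_closedBall_self (hρ a ha).le))
  calc volume S ≤ ∑' b : u, volume (Metric.closedBall (b : ℝ) (4 * ρ b)) :=
        (measure_mono hcover).trans (measure_biUnion_le volume hcount _)
    _ = 4 * ∑' b : u, volume (Ioo ((b : ℝ) - ρ b) (b + ρ b)) := by
        rw [← ENNReal.tsum_mul_left]
        refine tsum_congr fun b => ?_
        rw [Real.volume_closedBall, Real.volume_Ioo, ← ENNReal.ofReal_ofNat 4,
          ← ENNReal.ofReal_mul (by norm_num)]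
        ring_nf

def maximalFunction (w : ℝ → ℝ≥0∞) (t : ℝ) : ℝ≥0∞ :=
  ⨆ (r : ℝ) (_ : 0 < r), ⨍⁻ σ in Ioo (t - r) (t + r), w σ ∂volume

lemma volume_Ioo_sub_add (t r : ℝ) : volume (Ioo (t - r) (t + r)) = ENNReal.ofReal (2 * r) := by
  rw [Real.volume_Ioo]; ring_nf

lemma mul_volume_lt_setLIntegral_of_lt_maximalFunction {w : ℝ → ℝ≥0∞} {c : ℝ≥0∞} {t : ℝ}
    (h : c < maximalFunction w t) :
    ∃ r, 0 < r ∧ c * volume (Ioo (t - r) (t + r)) < ∫⁻ σ in Ioo (t - r) (t + r), w σ := by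
  obtain ⟨r, hr, hlt⟩ := by simpa only [maximalFunction, lt_iSup_iff] using h
  refine ⟨r, hr, ?_⟩
  rw [setLAverage_eq, ENNReal.lt_div_iff_mul_lt] at hlt
  · exact hlt
  · simp [hr]
  · simp

lemma mul_volume_lt_maximalFunction_le (w : ℝ → ℝ≥0∞) (c : ℝ≥0∞) :
    c * volume {t | c < maximalFunction w t} ≤ 4 * ∫⁻ σ, w σ := by
  rcases eq_or_ne c ⊤ with rfl | hc
  · simp
  rcases eq_or_ne c 0 with rfl | hc0
  · simp
  rcases eq_or_ne (∫⁻ σ, w σ) ⊤ with hI | hI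
  · simp [hI]
  set S := {t | c < maximalFunction w t}
  choose! ρ hρ hρlt using fun t (ht : t ∈ S) => mul_volume_lt_setLIntegral_of_lt_maximalFunction ht
  have hR : ∀ t ∈ S, ρ t ≤ ((∫⁻ σ, w σ) / c).toReal := by
    intro t ht
    have h : c * ENNReal.ofReal (2 * ρ t) ≤ ∫⁻ σ, w σ := by
      rw [← volume_Ioo_sub_add t]
      exact (hρlt t ht).le.trans (setLIntegral_le_lintegral _ _)
    rw [mul_comm, ← ENNReal.le_div_iff_mul_le (Or.inl hc0) (Or.inl hc),
      ENNReal.ofReal_le_iff_le_toReal (ENNReal.div_ne_top hI hc0)] at h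
    linarith [hρ t ht]
  obtain ⟨u, huS, hcount, hdisj, hvol⟩ := exists_pairwiseDisjoint_Ioo_volume_le hρ hR
  calc c * volume S ≤ c * (4 * ∑' b : u, volume (Ioo ((b : ℝ) - ρ b) (b + ρ b))) := by gcongr
    _ = 4 * ∑' b : u, c * volume (Ioo ((b : ℝ) - ρ b) (b + ρ b)) := by
        rw [ENNReal.tsum_mul_left]; ring
    _ ≤ 4 * ∑' b : u, ∫⁻ σ in Ioo ((b : ℝ) - ρ b) (b + ρ b), w σ := by
        gcongr with b
        exact (hρlt b (huS b.2)).le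
    _ = 4 * ∫⁻ σ in ⋃ b ∈ u, Ioo (b - ρ b) (b + ρ b), w σ := by
        rw [lintegral_biUnion hcount (fun _ _ => measurableSet_Ioo) hdisj]
    _ ≤ 4 * ∫⁻ σ, w σ := by gcongr 1; exact setLIntegral_le_lintegral _ _

lemma measurable_setLIntegral_Ioo_sub_add {w : ℝ → ℝ≥0∞} (hw : Measurable w) (r : ℝ) :
    Measurable fun t => ∫⁻ σ in Ioo (t - r) (t + r), w σ := by
  simp_rw [← lintegral_indicator measurableSet_Ioo, indicator_apply]
  refine Measurable.lintegral_prod_right' (f := fun p : ℝ × ℝ =>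
    if p.2 ∈ Ioo (p.1 - r) (p.1 + r) then w p.2 else 0) ?_
  refine Measurable.ite ?_ (hw.comp measurable_snd) measurable_const
  exact (measurableSet_lt (measurable_fst.sub_const r) measurable_snd).inter
    (measurableSet_lt measurable_snd (measurable_fst.add_const r))

lemma maximalFunction_eq_iSup_rat (w : ℝ → ℝ≥0∞) (t : ℝ) :
    maximalFunction w t = ⨆ (q : ℚ) (_ : 0 < q), ⨍⁻ σ in Ioo (t - q) (t + q), w σ ∂volume := by
  refine le_antisymm (iSup₂_le fun r hr => ?_)
    (iSup₂_le fun q hq => le_iSup₂_of_le (q : ℝ) (Rat.cast_pos.2 hq) le_rfl)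
  have hU : Ioo (t - r) (t + r) = ⋃ q : {q : ℚ // 0 < q ∧ (q : ℝ) < r}, Ioo (t - q) (t + q) := by
    ext σ
    simp only [mem_Ioo, mem_iUnion]
    constructor
    · rintro ⟨h₁, h₂⟩
      obtain ⟨q, hσq, hqr⟩ := exists_rat_btwn (abs_sub_lt_iff.2 ⟨by linarith, by linarith⟩ :
        |σ - t| < r)
      have hq : (0 : ℝ) < q := (abs_nonneg _).trans_lt hσq
      exact ⟨⟨q, Rat.cast_pos.1 hq, hqr⟩, by linarith [le_abs_self (t - σ), abs_sub_comm σ t],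
        by linarith [le_abs_self (σ - t)]⟩
    · rintro ⟨q, h₁, h₂⟩
      constructor <;> linarith [q.2.2]
  have hmono : Monotone fun q : {q : ℚ // 0 < q ∧ (q : ℝ) < r} => Ioo (t - q) (t + q) :=
    fun a b hab => by
      have h : ((a : ℚ) : ℝ) ≤ (b : ℚ) := Rat.cast_le.2 hab
      exact Ioo_subset_Ioo (by linarith) (by linarith)
  rw [setLAverage_eq, volume_Ioo_sub_add, hU, setLIntegral_iUnion_of_directed _ hmono.directed_le,
    ENNReal.iSup_div]
  refine iSup_le fun q => le_iSup₂_of_le (q : ℚ) q.2.1 ?_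
  rw [setLAverage_eq, volume_Ioo_sub_add]
  gcongr
  exact q.2.2.le

lemma measurable_maximalFunction {w : ℝ → ℝ≥0∞} (hw : Measurable w) :
    Measurable (maximalFunction w) := by
  rw [funext (maximalFunction_eq_iSup_rat w)]
  simp only [setLAverage_eq, volume_Ioo_sub_add]
  exact .iSup fun q => .iSup fun _ => (measurable_setLIntegral_Ioo_sub_add hw q).div_const _

lemma maximalFunction_le_add_of_le {w w' : ℝ → ℝ≥0∞} {c : ℝ≥0∞} (h : ∀ σ, w σ ≤ w' σ + c)
    (t : ℝ) : maximalFunction w t ≤ maximalFunction w' t + c := by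
  refine iSup₂_le fun r hr => ?_
  have hvol : volume (Ioo (t - r) (t + r)) ≠ 0 := by simp [hr]
  calc ⨍⁻ σ in Ioo (t - r) (t + r), w σ ∂volume
      ≤ ⨍⁻ σ in Ioo (t - r) (t + r), (w' σ + c) ∂volume := laverage_mono_ae (.of_forall h)
    _ = (⨍⁻ σ in Ioo (t - r) (t + r), w' σ ∂volume) + ⨍⁻ _ in Ioo (t - r) (t + r), c ∂volume := by
        simp only [setLAverage_eq']
        exact lintegral_add_right _ measurable_const
    _ ≤ maximalFunction w' t + c := by
        rw [setLAverage_const hvol measure_Ioo_lt_top.ne]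
        gcongr
        exact le_iSup₂_of_le r hr le_rfl

-- Split `w` at height `l / 2`: the small part raises `M w` by at most `l / 2`, and the large part
-- obeys the weak `(1,1)` bound.
lemma ofReal_two_mul_mul_volume_lt_maximalFunction_le (w : ℝ → ℝ≥0∞) (l : ℝ) :
    ENNReal.ofReal (2 * l) * volume {t | ENNReal.ofReal l < maximalFunction w t} ≤
      16 * ∫⁻ σ in {σ | ENNReal.ofReal l < 2 * w σ}, w σ := by
  rcases le_or_gt l 0 with hl | hl
  · simp [ENNReal.ofReal_of_nonpos (by linarith : 2 * l ≤ 0)]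
  set A := {σ | ENNReal.ofReal l < 2 * w σ}
  set c := ENNReal.ofReal (l / 2) with hc
  have hlc : ENNReal.ofReal l = 2 * c := by
    rw [hc, ← ENNReal.ofReal_ofNat 2, ← ENNReal.ofReal_mul (by norm_num)]; ring_nf
  have hsplit : ∀ σ, w σ ≤ A.indicator w σ + c := fun σ => by
    by_cases hσ : σ ∈ A
    · simp [indicator_of_mem hσ]
    · rw [indicator_of_notMem hσ, zero_add]
      have : 2 * w σ ≤ 2 * c := by simpa [A, hlc] using hσ
      exact (ENNReal.mul_le_mul_iff_right two_ne_zero ofNat_ne_top).1 this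
  have hsub : {t | ENNReal.ofReal l < maximalFunction w t} ⊆
      {t | c < maximalFunction (A.indicator w) t} := fun t ht => by
    have := ht.trans_le (maximalFunction_le_add_of_le hsplit t)
    rw [hlc, two_mul] at this
    exact lt_of_add_lt_add_right this
  calc ENNReal.ofReal (2 * l) * volume {t | ENNReal.ofReal l < maximalFunction w t}
      ≤ 4 * (c * volume {t | c < maximalFunction (A.indicator w) t}) := by
        rw [← mul_assoc, show (2 : ℝ) * l = 4 * (l / 2) by ring, ENNReal.ofReal_mul (by norm_num),
          ENNReal.ofReal_ofNat]
        gcongr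
    _ ≤ 4 * (4 * ∫⁻ σ, A.indicator w σ) := by
        gcongr 4 * ?_
        exact mul_volume_lt_maximalFunction_le _ _
    _ ≤ 16 * ∫⁻ σ in A, w σ := by
        rw [← mul_assoc]
        exact mul_le_mul' (by norm_num) (lintegral_indicator_le _ _)

theorem lintegral_maximalFunction_sq_le {w : ℝ → ℝ≥0∞} (hw : Measurable w) :
    ∫⁻ t, maximalFunction w t ^ 2 ≤ 32 * ∫⁻ σ, w σ ^ 2 := by
  rw [lintegral_sq_eq_lintegral_meas_lt (measurable_maximalFunction hw)]
  calc ∫⁻ l in Ioi 0, ENNReal.ofReal (2 * l) * volume {t | ENNReal.ofReal l < maximalFunction w t}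
      ≤ ∫⁻ l in Ioi 0, 16 * ∫⁻ σ in {σ | ENNReal.ofReal l < 2 * w σ}, w σ :=
        lintegral_mono fun l => ofReal_two_mul_mul_volume_lt_maximalFunction_le w l
    _ = ∫⁻ σ, w σ * ∫⁻ _ in {l | ENNReal.ofReal l < 2 * w σ} ∩ Ioi 0, 16 :=
        lintegral_Ioi_mul_setLIntegral_lt (hw.const_mul 2) hw measurable_const
    _ = 32 * ∫⁻ σ, w σ ^ 2 := by
        simp only [setLIntegral_const, volume_setOf_ofReal_lt_inter_Ioi]
        rw [← lintegral_const_mul _ (hw.pow_const 2)]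
        congr 1 with σ
        ring

/-! ### Hardy's inequality -/

lemma sq_lintegral_le_lintegral_sq_mul_mul_lintegral_inv {h a : α → ℝ≥0∞}
    (hh : AEMeasurable h μ) (ha : AEMeasurable a μ)
    (ha₀ : ∀ᵐ x ∂μ, a x ≠ 0) (ha_top : ∀ᵐ x ∂μ, a x ≠ ⊤) :
    (∫⁻ x, h x ∂μ) ^ 2 ≤ (∫⁻ x, h x ^ 2 * a x ∂μ) * ∫⁻ x, (a x)⁻¹ ∂μ := by
  have hsplit : h =ᵐ[μ] fun x => (h x ^ 2 * a x) ^ (1 / 2 : ℝ) * (a x)⁻¹ ^ (1 / 2 : ℝ) := by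
    filter_upwards [ha₀, ha_top] with x hx₀ hx_top
    rw [← ENNReal.mul_rpow_of_nonneg _ _ (by norm_num), mul_assoc,
      ENNReal.mul_inv_cancel hx₀ hx_top, mul_one, ← ENNReal.rpow_natCast, ← ENNReal.rpow_mul]
    norm_num
  have hholder := ENNReal.lintegral_mul_le_Lp_mul_Lq μ Real.HolderConjugate.two_two
    (((hh.pow_const 2).mul ha).pow_const (1 / 2 : ℝ)) (ha.inv.pow_const (1 / 2 : ℝ))
  have hsq : ∀ b : ℝ≥0∞, (b ^ (1 / 2 : ℝ)) ^ (2 : ℝ) = b := fun b => by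
    rw [← ENNReal.rpow_mul]; norm_num
  simp only [Pi.mul_apply, Pi.inv_apply, hsq] at hholder
  calc (∫⁻ x, h x ∂μ) ^ 2
      ≤ ((∫⁻ x, h x ^ 2 * a x ∂μ) ^ (1 / 2 : ℝ) * (∫⁻ x, (a x)⁻¹ ∂μ) ^ (1 / 2 : ℝ)) ^ 2 := by
        rw [lintegral_congr_ae hsplit]
        gcongr
    _ = (∫⁻ x, h x ^ 2 * a x ∂μ) * ∫⁻ x, (a x)⁻¹ ∂μ := by
        rw [mul_pow, ← ENNReal.rpow_natCast, ← ENNReal.rpow_natCast, ← ENNReal.rpow_mul,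
          ← ENNReal.rpow_mul]
        norm_num

lemma lintegral_Ioi_rpow_neg_three_halves {t : ℝ} (ht : 0 < t) :
    ∫⁻ σ in Ioi t, ENNReal.ofReal (σ ^ (-(3 / 2) : ℝ)) =
      ENNReal.ofReal (2 * t ^ (-(1 / 2) : ℝ)) := by
  rw [← ofReal_integral_eq_lintegral_ofReal (integrableOn_Ioi_rpow_of_lt (by norm_num) ht)
    ((ae_restrict_mem measurableSet_Ioi).mono fun σ hσ => Real.rpow_nonneg (ht.trans hσ).le _),
    integral_Ioi_rpow_of_lt (by norm_num) ht]
  congr 1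
  rw [show -(3 / 2 : ℝ) + 1 = -(1 / 2) by norm_num]
  ring

/-- Cauchy–Schwarz with weight `σ^(3/2)`: any `σ^β` with `1 < β < 2` works, and `β = 3/2` makes
the later integration over `t` produce exactly `σ²`. -/
lemma sq_lintegral_Ioi_le {h : ℝ → ℝ≥0∞} (hh : Measurable h) {t : ℝ} (ht : 0 < t) :
    (∫⁻ σ in Ioi t, h σ) ^ 2 ≤
      (∫⁻ σ in Ioi t, h σ ^ 2 * ENNReal.ofReal (σ ^ (3 / 2 : ℝ))) *
        ENNReal.ofReal (2 * t ^ (-(1 / 2) : ℝ)) := by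
  have hpos : ∀ᵐ σ ∂volume.restrict (Ioi t), 0 < σ :=
    (ae_restrict_mem measurableSet_Ioi).mono fun σ hσ => ht.trans hσ
  refine (sq_lintegral_le_lintegral_sq_mul_mul_lintegral_inv
    (a := fun σ => ENNReal.ofReal (σ ^ (3 / 2 : ℝ)))
    hh.aemeasurable (by fun_prop) (hpos.mono fun σ hσ => by simpa using Real.rpow_pos_of_pos hσ _)
    (.of_forall fun _ => ofReal_ne_top)).trans_eq ?_
  rw [← lintegral_Ioi_rpow_neg_three_halves ht]
  congr 1
  refine setLIntegral_congr_fun measurableSet_Ioi fun σ hσ => ?_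
  rw [← ENNReal.ofReal_inv_of_pos (Real.rpow_pos_of_pos (ht.trans hσ) _),
    Real.rpow_neg (ht.trans hσ).le]

lemma lintegral_Ioi_mul_lintegral_Ioi {G k : ℝ → ℝ≥0∞} (hG : Measurable G) (hk : Measurable k)
    (a : ℝ) :
    ∫⁻ t in Ioi a, k t * ∫⁻ σ in Ioi t, G σ = ∫⁻ σ in Ioi a, G σ * ∫⁻ t in Ioo a σ, k t := by
  set S := {p : ℝ × ℝ | p.1 < p.2}
  have hF : Measurable (S.indicator fun p => k p.1 * G p.2) :=
    ((hk.comp measurable_fst).mul (hG.comp measurable_snd)).indicator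
      (measurableSet_lt measurable_fst measurable_snd)
  calc ∫⁻ t in Ioi a, k t * ∫⁻ σ in Ioi t, G σ
      = ∫⁻ t in Ioi a, ∫⁻ σ in Ioi a, S.indicator (fun p => k p.1 * G p.2) (t, σ) := by
        refine setLIntegral_congr_fun measurableSet_Ioi fun t ht => ?_
        rw [← lintegral_const_mul _ hG, ← lintegral_indicator measurableSet_Ioi,
          ← lintegral_indicator measurableSet_Ioi]
        congr 1 with σ
        by_cases hσ : t < σ
        · simp [hσ, ht.trans hσ, S]
        · simp [indicator_apply, hσ, S]
    _ = ∫⁻ σ in Ioi a, ∫⁻ t in Ioi a, S.indicator (fun p => k p.1 * G p.2) (t, σ) :=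
        lintegral_lintegral_swap hF.aemeasurable
    _ = ∫⁻ σ in Ioi a, G σ * ∫⁻ t in Ioo a σ, k t := by
        refine setLIntegral_congr_fun measurableSet_Ioi fun σ hσ => ?_
        rw [← lintegral_const_mul _ hk, ← Ioi_inter_Iio, inter_comm,
          ← Measure.restrict_restrict measurableSet_Iio,
          ← lintegral_indicator measurableSet_Iio]
        congr 1 with t
        by_cases ht : t < σ
        · simp [ht, S, mul_comm]
        · simp [ht, S]

lemma lintegral_Ioo_zero_rpow_neg_half {σ : ℝ} (hσ : 0 ≤ σ) :
    ∫⁻ t in Ioo 0 σ, ENNReal.ofReal (2 * t ^ (-(1 / 2) : ℝ)) =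
      ENNReal.ofReal (4 * σ ^ (1 / 2 : ℝ)) := by
  have hint : IntegrableOn (fun t : ℝ => 2 * t ^ (-(1 / 2) : ℝ)) (Ioo 0 σ) := by
    refine (IntegrableOn.mono_set ?_ Ioo_subset_Ioc_self).const_mul 2
    exact (intervalIntegrable_iff_integrableOn_Ioc_of_le hσ).1
      (intervalIntegral.intervalIntegrable_rpow' (by norm_num))
  rw [← ofReal_integral_eq_lintegral_ofReal hint ((ae_restrict_mem measurableSet_Ioo).mono
      fun t ht => by have := ht.1; positivity),
    ← integral_Ioc_eq_integral_Ioo, ← intervalIntegral.integral_of_le hσ,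
    intervalIntegral.integral_const_mul, integral_rpow (Or.inl (by norm_num)),
    Real.zero_rpow (by norm_num)]
  congr 1
  rw [show -(1 / 2 : ℝ) + 1 = 1 / 2 by norm_num]
  ring

theorem lintegral_Ioi_sq_lintegral_Ioi_le {h : ℝ → ℝ≥0∞} (hh : Measurable h) :
    ∫⁻ t in Ioi 0, (∫⁻ σ in Ioi t, h σ) ^ 2 ≤ 4 * ∫⁻ σ in Ioi 0, (h σ * ENNReal.ofReal σ) ^ 2 := by
  calc ∫⁻ t in Ioi 0, (∫⁻ σ in Ioi t, h σ) ^ 2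
      ≤ ∫⁻ t in Ioi 0, ENNReal.ofReal (2 * t ^ (-(1 / 2) : ℝ)) *
          ∫⁻ σ in Ioi t, h σ ^ 2 * ENNReal.ofReal (σ ^ (3 / 2 : ℝ)) :=
        setLIntegral_mono' measurableSet_Ioi fun t ht =>
          (sq_lintegral_Ioi_le hh ht).trans_eq (mul_comm _ _)
    _ = ∫⁻ σ in Ioi 0, h σ ^ 2 * ENNReal.ofReal (σ ^ (3 / 2 : ℝ)) *
          ∫⁻ t in Ioo 0 σ, ENNReal.ofReal (2 * t ^ (-(1 / 2) : ℝ)) :=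
        lintegral_Ioi_mul_lintegral_Ioi (by fun_prop) (by fun_prop) 0
    _ = ∫⁻ σ in Ioi 0, 4 * (h σ * ENNReal.ofReal σ) ^ 2 := by
        refine setLIntegral_congr_fun measurableSet_Ioi fun σ (hσ : 0 < σ) => ?_
        rw [lintegral_Ioo_zero_rpow_neg_half hσ.le, mul_assoc, ← ENNReal.ofReal_mul (by positivity),
          mul_pow, ← ENNReal.ofReal_pow hσ.le, mul_left_comm, ← Real.rpow_add hσ,
          show (3 / 2 + 1 / 2 : ℝ) = (2 : ℕ) by norm_num, Real.rpow_natCast,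
          ENNReal.ofReal_mul (by norm_num)]
        simp only [ENNReal.ofReal_ofNat]
        ring
    _ = 4 * ∫⁻ σ in Ioi 0, (h σ * ENNReal.ofReal σ) ^ 2 := lintegral_const_mul' _ _ (by norm_num)

/-! ### The radial wave -/

lemma ofReal_abs_sub_le_lintegral {g g' : ℝ → ℝ} (hg : ∀ x, HasDerivAt g (g' x) x)
    (hg' : Continuous g') {a b : ℝ} (hab : a ≤ b) :
    ENNReal.ofReal |g b - g a| ≤ ∫⁻ σ in Ioo a b, ENNReal.ofReal |g' σ| := by
  rw [← intervalIntegral.integral_eq_sub_of_hasDerivAt (fun x _ => hg x)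
    (hg'.intervalIntegrable a b), intervalIntegral.integral_of_le hab,
    setLIntegral_congr Ioo_ae_eq_Ioc]
  simpa only [← Real.enorm_eq_ofReal_abs] using enorm_integral_le_lintegral_enorm g'

lemma ofReal_abs_le_lintegral_Ioi {g g' : ℝ → ℝ} (hg : ∀ x, HasDerivAt g (g' x) x)
    (hg' : Continuous g') (hg_top : Tendsto g atTop (𝓝 0)) (a : ℝ) :
    ENNReal.ofReal |g a| ≤ ∫⁻ σ in Ioi a, ENNReal.ofReal |g' σ| := by
  rcases eq_or_ne (∫⁻ σ in Ioi a, ENNReal.ofReal |g' σ|) ⊤ with h | h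
  · simp [h]
  have hint : IntegrableOn g' (Ioi a) :=
    ⟨hg'.aestronglyMeasurable, by
      simpa only [HasFiniteIntegral, Real.enorm_eq_ofReal_abs] using h.lt_top⟩
  have hFTC : ∫ σ in Ioi a, g' σ = 0 - g a :=
    integral_Ioi_of_hasDerivAt_of_tendsto' (fun x _ => hg x) hint hg_top
  rw [← abs_neg, ← zero_sub, ← hFTC]
  simpa only [← Real.enorm_eq_ofReal_abs] using enorm_integral_le_lintegral_enorm g'

lemma lintegral_comp_abs (g : ℝ → ℝ≥0∞) : ∫⁻ σ, g |σ| = 2 * ∫⁻ σ in Ioi 0, g σ := by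
  have hpos : ∫⁻ σ in Ioi 0, g |σ| = ∫⁻ σ in Ioi 0, g σ :=
    setLIntegral_congr_fun measurableSet_Ioi fun σ (hσ : 0 < σ) => by rw [abs_of_pos hσ]
  have hneg : ∫⁻ σ in Iic 0, g |σ| = ∫⁻ σ in Ioi 0, g σ := calc
    ∫⁻ σ in Iic 0, g |σ| = ∫⁻ σ in (fun x => -x) ⁻¹' Ioi 0, g (-σ) := by
      rw [← setLIntegral_congr Iio_ae_eq_Iic, show (fun x : ℝ => -x) ⁻¹' Ioi 0 = Iio 0 by ext; simp]
      exact setLIntegral_congr_fun measurableSet_Iio fun σ (hσ : σ < 0) => by rw [abs_of_neg hσ]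
    _ = ∫⁻ σ in Ioi 0, g σ := (Measure.measurePreserving_neg volume).setLIntegral_comp_preimage_emb
      (Homeomorph.neg ℝ).measurableEmbedding g _
  rw [← lintegral_add_compl _ measurableSet_Ioi, compl_Ioi, hpos, hneg, two_mul]

def derivIdMul (f : ℝ → ℝ) (ρ : ℝ) : ℝ := f ρ + ρ * deriv f ρ

lemma continuous_derivIdMul {f : ℝ → ℝ} (hf : ContDiff ℝ 1 f) : Continuous (derivIdMul f) :=
  hf.continuous.add (continuous_id.mul (hf.continuous_deriv le_rfl))

lemma hasDerivAt_mul_comp_abs {f : ℝ → ℝ} (hf : Differentiable ℝ f) (s : ℝ) :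
    HasDerivAt (fun u => u * f |u|) (derivIdMul f |s|) s := by
  rcases eq_or_ne s 0 with rfl | hs
  · rw [hasDerivAt_iff_tendsto_slope]
    have hslope : ∀ u ∈ ({0}ᶜ : Set ℝ), f |u| = slope (fun u : ℝ => u * f |u|) 0 u := fun u hu => by
      rw [slope_def_field]
      field_simp [show u ≠ 0 from hu]
      simp
    simp only [derivIdMul, abs_zero, zero_mul, add_zero]
    refine Tendsto.congr' (eventually_mem_nhdsWithin.mono hslope) ?_
    have hc : Continuous fun u => f |u| := hf.continuous.comp continuous_abs
    simpa using (hc.tendsto 0).mono_left nhdsWithin_le_nhds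
  · refine ((hasDerivAt_id' s).mul ((hf |s|).hasDerivAt.comp s (hasDerivAt_abs hs))).congr_deriv ?_
    rw [derivIdMul, Function.comp_apply, one_mul, mul_left_comm, self_mul_sign, mul_comm]

lemma lintegral_Ioi_sq_le_energy {f : ℝ → ℝ} (hf : ContDiff ℝ 1 f) (h0 : Tendsto f atTop (𝓝 0)) :
    ∫⁻ σ in Ioi 0, ENNReal.ofReal |derivIdMul f σ| ^ 2 ≤
      10 * ∫⁻ ρ in Ioi 0, ENNReal.ofReal (|deriv f ρ| ^ 2 * ρ ^ 2) := by
  set F : ℝ → ℝ≥0∞ := fun σ => ∫⁻ ρ in Ioi σ, ENNReal.ofReal |deriv f ρ|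
  set D : ℝ → ℝ≥0∞ := fun σ => ENNReal.ofReal |deriv f σ| * ENNReal.ofReal σ
  have hderiv : Continuous (deriv f) := hf.continuous_deriv le_rfl
  have hF : Measurable F :=
    Antitone.measurable fun a b hab => lintegral_mono_set (Ioi_subset_Ioi hab)
  have hsq : ∀ a b : ℝ≥0∞, (a + b) ^ 2 ≤ 2 * (a ^ 2 + b ^ 2) := fun a b => by
    have := ENNReal.rpow_add_le_mul_rpow_add_rpow a b (p := 2) one_le_two
    norm_num [ENNReal.rpow_two] at this
    exact this
  have hptw : ∀ σ ∈ Ioi (0 : ℝ), ENNReal.ofReal |derivIdMul f σ| ^ 2 ≤ 2 * (F σ ^ 2 + D σ ^ 2) :=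
    fun σ (hσ : 0 < σ) => by
      refine (pow_le_pow_left' ?_ 2).trans (hsq _ _)
      calc ENNReal.ofReal |derivIdMul f σ|
          ≤ ENNReal.ofReal (|f σ| + |deriv f σ| * σ) := by
            refine ENNReal.ofReal_le_ofReal ((abs_add_le _ _).trans_eq ?_)
            rw [abs_mul, abs_of_pos hσ, mul_comm]
        _ ≤ F σ + D σ := by
            rw [ENNReal.ofReal_add (abs_nonneg _) (by positivity),
              ENNReal.ofReal_mul (abs_nonneg _)]
            gcongr
            exact ofReal_abs_le_lintegral_Ioi
              (fun x => (hf.differentiable one_ne_zero x).hasDerivAt) hderiv h0 σ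
  calc ∫⁻ σ in Ioi 0, ENNReal.ofReal |derivIdMul f σ| ^ 2
      ≤ ∫⁻ σ in Ioi 0, 2 * (F σ ^ 2 + D σ ^ 2) := setLIntegral_mono' measurableSet_Ioi hptw
    _ = 2 * ((∫⁻ σ in Ioi 0, F σ ^ 2) + ∫⁻ σ in Ioi 0, D σ ^ 2) := by
        rw [lintegral_const_mul' _ _ ofNat_ne_top, lintegral_add_left (hF.pow_const 2)]
    _ ≤ 2 * (4 * (∫⁻ σ in Ioi 0, D σ ^ 2) + ∫⁻ σ in Ioi 0, D σ ^ 2) := by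
        gcongr
        exact lintegral_Ioi_sq_lintegral_Ioi_le (by fun_prop)
    _ = 10 * ∫⁻ ρ in Ioi 0, ENNReal.ofReal (|deriv f ρ| ^ 2 * ρ ^ 2) := by
        rw [show ∀ x : ℝ≥0∞, 2 * (4 * x + x) = 10 * x from fun x => by ring]
        congr 1
        refine setLIntegral_congr_fun measurableSet_Ioi fun ρ (hρ : 0 < ρ) => ?_
        simp only [D]
        rw [← ENNReal.ofReal_mul (abs_nonneg _), ← ENNReal.ofReal_pow (by positivity), mul_pow]

lemma ofReal_abs_sub_div_le_two_mul_laverage {g g' : ℝ → ℝ} (hg : ∀ x, HasDerivAt g (g' x) x)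
    (hg' : Continuous g') (t : ℝ) {r : ℝ} (hr : 0 < r) :
    ENNReal.ofReal |(g (t + r) - g (t - r)) / r| ≤
      2 * ⨍⁻ σ in Ioo (t - r) (t + r), ENNReal.ofReal |g' σ| ∂volume := by
  rw [abs_div, abs_of_pos hr, ENNReal.ofReal_div_of_pos hr, setLAverage_eq, volume_Ioo_sub_add,
    ENNReal.ofReal_mul zero_le_two, ENNReal.ofReal_ofNat, ← mul_div_assoc,
    ENNReal.mul_div_mul_left _ _ two_ne_zero ofNat_ne_top]
  gcongr
  exact ofReal_abs_sub_le_lintegral hg hg' (by linarith)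

lemma iSup_ofReal_abs_wave_le {f : ℝ → ℝ} (hf : ContDiff ℝ 1 f) {v : ℝ → ℝ → ℝ}
    (hv : ∀ t r, 0 < t → 0 < r → v t r = (1 / r) * (f (r + t) * (r + t) - f |r - t| * (t - r)))
    {t : ℝ} (ht : 0 < t) :
    ⨆ (r : ℝ) (_ : 0 < r), ENNReal.ofReal |v t r| ≤
      2 * maximalFunction (fun σ => ENNReal.ofReal |derivIdMul f (|σ|)|) t := by
  refine iSup₂_le fun r hr => ?_
  have hvg : v t r = ((t + r) * f |t + r| - (t - r) * f |t - r|) / r := by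
    rw [hv t r ht hr, abs_of_pos (by linarith : 0 < t + r), abs_sub_comm r t, add_comm r t]
    ring
  rw [hvg]
  refine (ofReal_abs_sub_div_le_two_mul_laverage
    (hasDerivAt_mul_comp_abs (hf.differentiable one_ne_zero))
    ((continuous_derivIdMul hf).comp continuous_abs) t hr).trans ?_
  gcongr
  exact le_iSup₂_of_le r hr le_rfl

end RadialWave

open RadialWave

/-- Endpoint bound for the radial free wave with data `(f,0)`: with
`v(t,r) = r⁻¹ [f(r+t)(r+t) - f(|r-t|)(t-r)]`, one has
`‖sup_{r>0}|v(t,r)|‖_{L²_t(0,∞)} ≤ C ‖∇f‖_{L²(ℝ³)}`, where for radial `f` the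
`Ḣ¹(ℝ³)` seminorm is a constant multiple of `(∫_0^∞ |f'(ρ)|²ρ² dρ)^{1/2}`
(stated in squared form). -/
theorem radial_wave_data_f_bound :
    ∃ C : ℝ≥0∞, 0 < C ∧ C < ⊤ ∧
      ∀ f : ℝ → ℝ, ContDiff ℝ 1 f → Tendsto f atTop (nhds 0) →
        (∫⁻ ρ in Set.Ioi (0:ℝ), ENNReal.ofReal (|deriv f ρ|^2 * ρ^2)) < ⊤ →
        ∀ v : ℝ → ℝ → ℝ,
          (∀ t r, 0 < t → 0 < r →
            v t r = (1/r) * (f (r + t) * (r + t) - f |r - t| * (t - r))) →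
          (∫⁻ t in Set.Ioi (0:ℝ),
              (⨆ (r : ℝ) (_ : 0 < r), ENNReal.ofReal |v t r|)^2) ≤
            C * ∫⁻ ρ in Set.Ioi (0:ℝ), ENNReal.ofReal (|deriv f ρ|^2 * ρ^2) := by
  refine ⟨2560, by norm_num, by norm_num, fun f hf h0 _ v hv => ?_⟩
  set W : ℝ → ℝ≥0∞ := fun ρ => ENNReal.ofReal |derivIdMul f ρ|
  have hW : Measurable fun σ => W |σ| :=
    ((continuous_derivIdMul hf).comp continuous_abs).measurable.abs.ennreal_ofReal
  calc ∫⁻ t in Ioi 0, (⨆ (r : ℝ) (_ : 0 < r), ENNReal.ofReal |v t r|) ^ 2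
      ≤ ∫⁻ t, (2 * maximalFunction (fun σ => W |σ|) t) ^ 2 :=
        (setLIntegral_mono' measurableSet_Ioi fun t ht =>
          pow_le_pow_left' (iSup_ofReal_abs_wave_le hf hv ht) 2).trans
            (setLIntegral_le_lintegral _ _)
    _ = 4 * ∫⁻ t, maximalFunction (fun σ => W |σ|) t ^ 2 := by
        simp only [mul_pow]
        rw [lintegral_const_mul' _ _ (by norm_num)]
        norm_num
    _ ≤ 4 * (32 * (2 * ∫⁻ σ in Ioi 0, W σ ^ 2)) := by
        rw [← lintegral_comp_abs fun ρ => W ρ ^ 2]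
        gcongr
        exact lintegral_maximalFunction_sq_le hW
    _ ≤ 4 * (32 * (2 * (10 * ∫⁻ ρ in Ioi 0, ENNReal.ofReal (|deriv f ρ| ^ 2 * ρ ^ 2)))) := by
        gcongr
        exact lintegral_Ioi_sq_le_energy hf h0
    _ = 2560 * ∫⁻ ρ in Ioi 0, ENNReal.ofReal (|deriv f ρ| ^ 2 * ρ ^ 2) := by ring
end
end
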